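/- arXiv:2011.02085 — 2 statements merged into one kernel-verified Lean document; each statement's English description precedes it below -/
import Mathlib

section
/- Let K be an algebraically closed field, E a finite dimensional local K-algebra, and A a finite dimensional local K-algebra. Then the tensor product E ⊗_K A is a local ring. -/
/-!
Let `J(R)` denote the Jacobson radical, a nilpotent two-sided ideal since the algebras are
finite dimensional. Over an algebraically closed field every element of a finite dimensional
local algebra is a scalar plus a nonunit, and in a local ring the nonunits lie in `J(R)`. Hence
every element of `E ⊗ A` is a scalar plus an element of `J(E) ⊗ A + E ⊗ J(A)`. Both summands are
nilpotent two-sided ideals, so their sum is nil, and a nonzero scalar plus a nilpotent element is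
a unit.
-/

open TensorProduct

theorem IsLocalRing.mem_jacobson_of_not_isUnit {R : Type*} [Ring R] [IsLocalRing R]
    [IsDedekindFiniteMonoid R] {x : R} (hx : ¬IsUnit x) : x ∈ Ring.jacobson R := by
  rw [← Ideal.jacobson_bot, Ideal.mem_jacobson_iff]
  intro y
  have hyx : ¬IsUnit (y * x) := by
    rintro ⟨u, hu⟩
    refine hx (IsUnit.of_mul_eq_one (↑u⁻¹ * y) (mul_eq_one_symm ?_))
    rw [mul_assoc, ← hu, Units.inv_mul]
  obtain ⟨u, hu⟩ : IsUnit (y * x + 1) :=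
    (isUnit_or_isUnit_of_add_one (add_neg_cancel_comm _ _)).resolve_right
      (by rwa [IsUnit.neg_iff])
  refine ⟨↑u⁻¹, ?_⟩
  rw [Submodule.mem_bot, mul_assoc, ← mul_add_one, ← hu, Units.inv_mul, sub_self]

theorem IsLocalRing.of_forall_exists_sub_algebraMap_mem {K R : Type*} [Field K] [Ring R]
    [Nontrivial R] [Algebra K R] (S : Submodule K R) (hS : ∀ s ∈ S, IsNilpotent s)
    (h : ∀ x, ∃ c : K, x - algebraMap K R c ∈ S) : IsLocalRing R := by
  refine .of_isUnit_or_isUnit_one_sub_self fun x => ?_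
  obtain ⟨c, hc⟩ := h x
  rcases eq_or_ne c 0 with rfl | hc0
  · right
    simpa using (hS _ hc).isUnit_one_sub
  · left
    simpa using (hS _ hc).isUnit_add_left_of_commute
      ((isUnit_iff_ne_zero.2 hc0).map (algebraMap K R)) (Algebra.commutes c _).symm

section Submodule

variable {K R : Type*} [CommSemiring K]

theorem Submodule.isNilpotent_of_mem [Semiring R] [Algebra K R] {I : Submodule K R}
    (hI : IsNilpotent I) {x : R} (hx : x ∈ I) : IsNilpotent x := by
  obtain ⟨n, hn⟩ := hI
  exact ⟨n, by simpa [hn] using pow_mem_pow I hx n⟩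

theorem Submodule.isNilpotent_add_of_mem [Ring R] [Algebra K R] {I : Submodule K R}
    (hleft : ⊤ * I ≤ I) (hright : I * ⊤ ≤ I) (hI : IsNilpotent I) {y z : R} (hy : y ∈ I)
    (hz : IsNilpotent z) : IsNilpotent (y + z) := by
  have hpow : ∀ n : ℕ, (y + z) ^ n - z ^ n ∈ I := by
    intro n
    induction n with
    | zero => simp
    | succ n ih =>
      have h : (y + z) ^ (n + 1) - z ^ (n + 1) =
          ((y + z) ^ n - z ^ n) * (y + z) + z ^ n * y := by
        noncomm_ring
      rw [h]
      exact I.add_mem (hright (mul_mem_mul ih mem_top)) (hleft (mul_mem_mul mem_top hy))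
  obtain ⟨n, hn⟩ := hz
  exact .of_pow (isNilpotent_of_mem hI (by simpa [hn] using hpow n))

variable [Ring R] [Algebra K R]

theorem Ideal.top_mul_restrictScalars_le (I : Ideal R) :
    ⊤ * I.restrictScalars K ≤ I.restrictScalars K :=
  Submodule.mul_le.2 fun a _ _ hb => I.mul_mem_left a hb

theorem Ideal.restrictScalars_mul_top_le (I : Ideal R) [I.IsTwoSided] :
    I.restrictScalars K * ⊤ ≤ I.restrictScalars K :=
  Submodule.mul_le.2 fun _ ha b _ => I.mul_mem_right b ha

end Submodule

section FiniteDimensional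

variable (K : Type*) {R : Type*} [Field K] [Ring R] [Algebra K R] [FiniteDimensional K R]

theorem exists_sub_algebraMap_mem_jacobson [IsAlgClosed K] [IsLocalRing R] (x : R) :
    ∃ c : K, x - algebraMap K R c ∈ Ring.jacobson R := by
  have := IsArtinianRing.of_finite K R
  obtain ⟨c, hc⟩ := spectrum.nonempty_of_isAlgClosed_of_finiteDimensional K x
  refine ⟨c, IsLocalRing.mem_jacobson_of_not_isUnit fun h => spectrum.mem_iff.1 hc ?_⟩
  rw [← neg_sub]
  exact h.neg

theorem isNilpotent_restrictScalars_jacobson :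
    IsNilpotent ((Ring.jacobson R).restrictScalars K) := by
  have := IsArtinianRing.of_finite K R
  obtain ⟨n, hn⟩ := IsArtinianRing.isNilpotent_jacobson_bot (R := R)
  refine ⟨n + 1, ?_⟩
  rw [← Submodule.restrictScalars_pow (Nat.add_one_ne_zero n), ← Ideal.jacobson_bot,
    Submodule.pow_succ, hn, Submodule.zero_eq_bot, Submodule.bot_mul]
  rfl

end FiniteDimensional

section TensorProduct

variable {K E A : Type*} [CommSemiring K]

section Semiring

variable [Semiring E] [Algebra K E] [Semiring A] [Algebra K A]

theorem TensorProduct.map₂_mk_mul_map₂_mk_le (P P' : Submodule K E) (Q Q' : Submodule K A) :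
    Submodule.map₂ (mk K E A) P Q * Submodule.map₂ (mk K E A) P' Q' ≤
      Submodule.map₂ (mk K E A) (P * P') (Q * Q') := by
  simp_rw [Submodule.map₂_eq_span_image2, Submodule.span_mul_span]
  refine Submodule.span_mono ?_
  rintro _ ⟨_, ⟨p, hp, q, hq, rfl⟩, _, ⟨p', hp', q', hq', rfl⟩, rfl⟩
  exact ⟨p * p', Submodule.mul_mem_mul hp hp', q * q', Submodule.mul_mem_mul hq hq',
    (Algebra.TensorProduct.tmul_mul_tmul ..).symm⟩

theorem TensorProduct.map₂_mk_pow_le (P : Submodule K E) (Q : Submodule K A) (n : ℕ) :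
    Submodule.map₂ (mk K E A) P Q ^ (n + 1) ≤
      Submodule.map₂ (mk K E A) (P ^ (n + 1)) (Q ^ (n + 1)) := by
  induction n with
  | zero => simp
  | succ n ih =>
    rw [pow_succ _ (n + 1), pow_succ P, pow_succ Q]
    exact (mul_le_mul_left ih _).trans (map₂_mk_mul_map₂_mk_le ..)

theorem TensorProduct.isNilpotent_map₂_mk_left {P : Submodule K E} (hP : IsNilpotent P)
    (Q : Submodule K A) : IsNilpotent (Submodule.map₂ (mk K E A) P Q) := by
  obtain ⟨n, hn⟩ := hP
  refine ⟨n + 1, le_bot_iff.1 ((map₂_mk_pow_le P Q n).trans ?_)⟩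
  rw [pow_succ, hn, zero_mul]
  exact (Submodule.map₂_bot_left _ _).le

theorem TensorProduct.isNilpotent_map₂_mk_right (P : Submodule K E) {Q : Submodule K A}
    (hQ : IsNilpotent Q) : IsNilpotent (Submodule.map₂ (mk K E A) P Q) := by
  obtain ⟨n, hn⟩ := hQ
  refine ⟨n + 1, le_bot_iff.1 ((map₂_mk_pow_le P Q n).trans ?_)⟩
  rw [pow_succ Q, hn, zero_mul]
  exact (Submodule.map₂_bot_right _ _).le

theorem TensorProduct.top_mul_map₂_mk_le {P : Submodule K E} {Q : Submodule K A}
    (hP : ⊤ * P ≤ P) (hQ : ⊤ * Q ≤ Q) :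
    ⊤ * Submodule.map₂ (mk K E A) P Q ≤ Submodule.map₂ (mk K E A) P Q := by
  rw [← map₂_mk_top_top_eq_top]
  exact (map₂_mk_mul_map₂_mk_le ..).trans (Submodule.map₂_le_map₂ hP hQ)

theorem TensorProduct.map₂_mk_mul_top_le {P : Submodule K E} {Q : Submodule K A}
    (hP : P * ⊤ ≤ P) (hQ : Q * ⊤ ≤ Q) :
    Submodule.map₂ (mk K E A) P Q * ⊤ ≤ Submodule.map₂ (mk K E A) P Q := by
  rw [← map₂_mk_top_top_eq_top]
  exact (map₂_mk_mul_map₂_mk_le ..).trans (Submodule.map₂_le_map₂ hP hQ)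

end Semiring

theorem TensorProduct.exists_sub_algebraMap_mem_map₂_mk_sup [Ring E] [Algebra K E] [Ring A]
    [Algebra K A] {P : Submodule K E} {Q : Submodule K A}
    (hP : ∀ e, ∃ c : K, e - algebraMap K E c ∈ P) (hQ : ∀ a, ∃ c : K, a - algebraMap K A c ∈ Q)
    (x : E ⊗[K] A) : ∃ c : K, x - algebraMap K (E ⊗[K] A) c ∈
      Submodule.map₂ (mk K E A) P ⊤ ⊔ Submodule.map₂ (mk K E A) ⊤ Q := by
  induction x using TensorProduct.induction_on with
  | zero => exact ⟨0, by simp⟩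
  | tmul e a =>
    obtain ⟨c, hc⟩ := hP e
    obtain ⟨d, hd⟩ := hQ a
    refine ⟨c * d, ?_⟩
    have hcd : algebraMap K (E ⊗[K] A) (c * d) = algebraMap K E c ⊗ₜ algebraMap K A d := by
      rw [map_mul, Algebra.TensorProduct.algebraMap_apply,
        Algebra.TensorProduct.algebraMap_apply', Algebra.TensorProduct.tmul_mul_tmul, mul_one,
        one_mul]
    have h : e ⊗ₜ[K] a - algebraMap K (E ⊗[K] A) (c * d) =
        (e - algebraMap K E c) ⊗ₜ a + algebraMap K E c ⊗ₜ (a - algebraMap K A d) := by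
      rw [hcd, sub_tmul, tmul_sub]
      abel
    rw [h]
    exact Submodule.add_mem_sup (Submodule.apply_mem_map₂ _ hc Submodule.mem_top)
      (Submodule.apply_mem_map₂ _ Submodule.mem_top hd)
  | add x y hx hy =>
    obtain ⟨c, hc⟩ := hx
    obtain ⟨d, hd⟩ := hy
    refine ⟨c + d, ?_⟩
    rw [map_add, add_sub_add_comm]
    exact Submodule.add_mem _ hc hd

end TensorProduct

/-- If `K` is an algebraically closed field and `E`, `A` are finite dimensional local
`K`-algebras, then `E ⊗[K] A` is a local ring. -/
theorem tensor_of_local_isLocalRing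
    (K E A : Type) [Field K] [IsAlgClosed K]
    [Ring E] [Algebra K E] [FiniteDimensional K E] [IsLocalRing E]
    [Ring A] [Algebra K A] [FiniteDimensional K A] [IsLocalRing A] :
    IsLocalRing (E ⊗[K] A) := by
  let JE : Submodule K E := (Ring.jacobson E).restrictScalars K
  let JA : Submodule K A := (Ring.jacobson A).restrictScalars K
  let I₁ := Submodule.map₂ (mk K E A) JE ⊤
  let I₂ := Submodule.map₂ (mk K E A) ⊤ JA
  have hI₁ : IsNilpotent I₁ := isNilpotent_map₂_mk_left (isNilpotent_restrictScalars_jacobson K) ⊤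
  have hI₂ : IsNilpotent I₂ := isNilpotent_map₂_mk_right ⊤ (isNilpotent_restrictScalars_jacobson K)
  have hcover : ∀ x, ∃ c : K, x - algebraMap K (E ⊗[K] A) c ∈ I₁ ⊔ I₂ :=
    exists_sub_algebraMap_mem_map₂_mk_sup (exists_sub_algebraMap_mem_jacobson K)
      (exists_sub_algebraMap_mem_jacobson K)
  refine IsLocalRing.of_forall_exists_sub_algebraMap_mem (I₁ ⊔ I₂) ?_ hcover
  have hI₁_left : ⊤ * I₁ ≤ I₁ := top_mul_map₂_mk_le (Ideal.top_mul_restrictScalars_le _) le_top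
  have hI₁_right : I₁ * ⊤ ≤ I₁ := map₂_mk_mul_top_le (Ideal.restrictScalars_mul_top_le _) le_top
  rintro _ hx
  obtain ⟨y, hy, z, hz, rfl⟩ := Submodule.mem_sup.1 hx
  exact Submodule.isNilpotent_add_of_mem hI₁_left hI₁_right hI₁ hy
    (Submodule.isNilpotent_of_mem hI₂ hz)
end

section
/- Let K be a field, Λ a finite dimensional K-algebra, and R a finite dimensional commutative K-algebra. If f : X → Y is a left 𝒴-approximation of X in K^b(proj Λ) for a full subcategory 𝒴 (i.e., every morphism X → Z with Z ∈ 𝒴 factors through f), then f ⊗_K R : X⊗_K R → Y⊗_K R is a left (𝒴⊗_K R)-approximation of X⊗_K R in K^b(proj(R⊗_K Λ)). -/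
/-!
Base change `R ⊗_K -` is left adjoint to restriction of scalars along `Λ → R ⊗_K Λ`, and an
adjunction between additive functors passes to homotopy categories. Hence a map
`X ⊗_K R → Z ⊗_K R` is the same as a map `X → Z ⊗_K R` of complexes of `Λ`-modules up to homotopy.
A `K`-basis of `R` splits `Z ⊗_K R` as a finite direct sum of copies of `Z`, so such a map
factors through `f` coordinatewise, and its adjoint then factors through `f ⊗_K R`.
-/

open TensorProduct CategoryTheory

attribute [local instance] RestrictScalars.moduleOrig

section TensorMod
variable (K R Λ : Type) [Field K] [Ring R] [Algebra K R] [Ring Λ] [Algebra K Λ]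
variable (M : Type) [AddCommGroup M] [Module Λ M]

/-- `R ⊗_K M`, where the `Λ`-module `M` is viewed as a `K`-module by restricting scalars. -/
abbrev TensorMod : Type := TensorProduct K R (RestrictScalars K Λ M)

/-- The action of `Λ` on the second factor of `R ⊗_K M`. -/
noncomputable def tensorModEndHom : Λ →+* Module.End K (TensorMod K R Λ M) where
  toFun a := (Module.toModuleEnd K (RestrictScalars K Λ M) a).lTensor R
  map_one' := by
    have h : Module.toModuleEnd K (RestrictScalars K Λ M) (1 : Λ) = LinearMap.id := by
      ext x; simp
    rw [h, LinearMap.lTensor_id]; rfl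
  map_mul' a b := by
    have h : Module.toModuleEnd K (RestrictScalars K Λ M) (a * b)
        = (Module.toModuleEnd K (RestrictScalars K Λ M) a) ∘ₗ
          (Module.toModuleEnd K (RestrictScalars K Λ M) b) := by
      ext x; simp [mul_smul]
    rw [h, LinearMap.lTensor_comp]; rfl
  map_zero' := by
    have h : Module.toModuleEnd K (RestrictScalars K Λ M) (0 : Λ) = 0 := by ext x; simp
    rw [h, LinearMap.lTensor_zero]
  map_add' a b := by
    have h : Module.toModuleEnd K (RestrictScalars K Λ M) (a + b)
        = Module.toModuleEnd K (RestrictScalars K Λ M) a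
          + Module.toModuleEnd K (RestrictScalars K Λ M) b := by
      ext x; simp [add_smul]
    rw [h, LinearMap.lTensor_add]

noncomputable instance tensorModModuleΛ : Module Λ (TensorMod K R Λ M) :=
  Module.compHom _ (tensorModEndHom K R Λ M)

lemma tensorMod_lambda_smul (a : Λ) (x : TensorMod K R Λ M) :
    a • x = (Module.toModuleEnd K (RestrictScalars K Λ M) a).lTensor R x := rfl

instance : IsScalarTower K Λ (TensorMod K R Λ M) := by
  constructor
  intro k a x
  rw [tensorMod_lambda_smul, tensorMod_lambda_smul]
  have h : Module.toModuleEnd K (RestrictScalars K Λ M) ((k • a : Λ))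
      = k • Module.toModuleEnd K (RestrictScalars K Λ M) a := by
    ext m
    show (k • a) • m = k • (a • m)
    rw [smul_assoc]
  rw [h, LinearMap.lTensor_smul]
  rfl

instance : SMulCommClass R Λ (TensorMod K R Λ M) := by
  constructor
  intro r a x
  induction x using TensorProduct.induction_on with
  | zero => simp
  | tmul s m =>
      rw [tensorMod_lambda_smul, TensorProduct.smul_tmul', LinearMap.lTensor_tmul,
        tensorMod_lambda_smul, LinearMap.lTensor_tmul, TensorProduct.smul_tmul']
  | add x y hx hy =>
      rw [smul_add, smul_add, hx, hy, ← smul_add, ← smul_add]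

noncomputable instance tensorModModule : Module (R ⊗[K] Λ) (TensorMod K R Λ M) :=
  TensorProduct.Algebra.module

end TensorMod

section TensorFunctor
variable (K R Λ : Type) [Field K] [Ring R] [Algebra K R] [Ring Λ] [Algebra K Λ]

/-- A `Λ`-linear map `f : M → N`, viewed as a `K`-linear map. -/
noncomputable def restrictMap {M N : Type} [AddCommGroup M] [Module Λ M]
    [AddCommGroup N] [Module Λ N] (f : M →ₗ[Λ] N) :
    RestrictScalars K Λ M →ₗ[K] RestrictScalars K Λ N where
  toFun m := f m
  map_add' x y := by exact f.map_add x y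
  map_smul' k x := by
    show f ((algebraMap K Λ k) • _) = (algebraMap K Λ k) • f _
    exact f.map_smul _ _

/-- The map `R ⊗ f : R ⊗ M → R ⊗ N` induced by a `Λ`-linear map `f`, as an
`(R ⊗[K] Λ)`-linear map. -/
noncomputable def tensorModMap {M N : Type} [AddCommGroup M] [Module Λ M]
    [AddCommGroup N] [Module Λ N] (f : M →ₗ[Λ] N) :
    TensorMod K R Λ M →ₗ[R ⊗[K] Λ] TensorMod K R Λ N where
  toFun := LinearMap.lTensor R (restrictMap K Λ f)
  map_add' x y := by simp
  map_smul' s x := by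
    dsimp only [RingHom.id_apply]
    induction s using TensorProduct.induction_on with
    | zero => rw [zero_smul, zero_smul, map_zero]
    | add s t hs ht => rw [add_smul, add_smul, map_add, hs, ht]
    | tmul r a =>
        rw [TensorProduct.Algebra.smul_def, TensorProduct.Algebra.smul_def]
        induction x using TensorProduct.induction_on with
        | zero => simp
        | add x y hx hy => rw [smul_add, smul_add, map_add, map_add, hx, hy, smul_add, smul_add]
        | tmul u m =>
            rw [tensorMod_lambda_smul, LinearMap.lTensor_tmul, TensorProduct.smul_tmul',
              LinearMap.lTensor_tmul, LinearMap.lTensor_tmul, tensorMod_lambda_smul,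
              LinearMap.lTensor_tmul, TensorProduct.smul_tmul']
            show (r • u) ⊗ₜ[K] (restrictMap K Λ f (a • m)) = (r • u) ⊗ₜ[K] (a • restrictMap K Λ f m)
            congr 1
            show f (a • m) = a • f m
            exact f.map_smul _ _

lemma restrictMap_id {M : Type} [AddCommGroup M] [Module Λ M] :
    restrictMap K Λ (LinearMap.id : M →ₗ[Λ] M) = LinearMap.id := by
  ext x; rfl

lemma restrictMap_comp {M N P : Type} [AddCommGroup M] [Module Λ M] [AddCommGroup N]
    [Module Λ N] [AddCommGroup P] [Module Λ P] (f : M →ₗ[Λ] N) (g : N →ₗ[Λ] P) :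
    restrictMap K Λ (g ∘ₗ f) = restrictMap K Λ g ∘ₗ restrictMap K Λ f := by
  ext x; rfl

/-- The base change functor `- ⊗_K R : mod Λ → mod (R ⊗_K Λ)` (tensoring over `K` with
`R`). -/
noncomputable def tensorFunctor : ModuleCat.{0} Λ ⥤ ModuleCat.{0} (R ⊗[K] Λ) where
  obj M := ModuleCat.of _ (TensorMod K R Λ M)
  map {M N} f := ModuleCat.ofHom
    (tensorModMap K R Λ f.hom : TensorMod K R Λ M →ₗ[R ⊗[K] Λ] TensorMod K R Λ N)
  map_id M := by
    apply ModuleCat.hom_ext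
    apply LinearMap.ext
    intro x
    show LinearMap.lTensor R (restrictMap K Λ (𝟙 M : M ⟶ M).hom) x = x
    rw [show ((𝟙 M : M ⟶ M).hom : _ →ₗ[Λ] _) = LinearMap.id from rfl, restrictMap_id,
      LinearMap.lTensor_id]
    rfl
  map_comp {M N P} f g := by
    apply ModuleCat.hom_ext
    apply LinearMap.ext
    intro x
    show LinearMap.lTensor R (restrictMap K Λ (f ≫ g).hom) x = _
    rw [show ((f ≫ g : M ⟶ P).hom : _ →ₗ[Λ] _) = (g.hom : _ →ₗ[Λ] _) ∘ₗ (f.hom : _ →ₗ[Λ] _)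
      from rfl, restrictMap_comp, LinearMap.lTensor_comp]
    rfl

noncomputable instance : (tensorFunctor K R Λ).Additive where
  map_add := by
    intro M N f g
    apply ModuleCat.hom_ext
    apply LinearMap.ext
    intro x
    show LinearMap.lTensor R (restrictMap K Λ (f + g).hom) x = _
    have h : restrictMap K Λ (f + g).hom = restrictMap K Λ f.hom + restrictMap K Λ g.hom := by
      ext; rfl
    rw [h, LinearMap.lTensor_add]
    rfl
end TensorFunctor

namespace CategoryTheory

variable {C D : Type*} [Category* C] [Category* D]

lemma Preadditive.exists_comp_eq_of_sum_comp_eq_id [Preadditive C] {X Y Z W : C} (f : X ⟶ Y)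
    (hf : ∀ g : X ⟶ Z, ∃ h, f ≫ h = g) {ι : Type*} [Fintype ι] (p : ι → (W ⟶ Z))
    (i : ι → (Z ⟶ W)) (hpi : ∑ j, p j ≫ i j = 𝟙 W) (g : X ⟶ W) : ∃ h, f ≫ h = g := by
  choose h hh using fun j => hf (g ≫ p j)
  refine ⟨∑ j, h j ≫ i j, ?_⟩
  simp only [Preadditive.comp_sum, ← Category.assoc, hh]
  simp only [Category.assoc, ← Preadditive.comp_sum, hpi, Category.comp_id]

lemma NatTrans.sum_mapHomologicalComplex_app_comp_app [Preadditive C] [Preadditive D]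
    {T T' : C ⥤ D} [T.Additive] [T'.Additive] {ι' : Type*} [Fintype ι'] (α : ι' → (T ⟶ T'))
    (β : ι' → (T' ⟶ T)) (h : ∑ j, α j ≫ β j = 𝟙 T) {ι : Type*} {c : ComplexShape ι}
    (Z : HomologicalComplex C c) :
    ∑ j, (NatTrans.mapHomologicalComplex (α j) c).app Z ≫
      (NatTrans.mapHomologicalComplex (β j) c).app Z = 𝟙 _ := by
  ext n
  have hn := NatTrans.congr_app h (Z.X n)
  simp only [NatTrans.app_sum, NatTrans.comp_app, NatTrans.id_app] at hn
  rw [← HomologicalComplex.Hom.fAddMonoidHom_apply, map_sum]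
  simp only [HomologicalComplex.Hom.fAddMonoidHom_apply, HomologicalComplex.comp_f,
    NatTrans.mapHomologicalComplex_app_f, HomologicalComplex.id_f]
  exact hn

namespace Adjunction

lemma exists_map_comp_eq {F : C ⥤ D} {G : D ⥤ C} (adj : F ⊣ G) {X Y : C} {Z : D}
    (f : X ⟶ Y) (hf : ∀ g : X ⟶ G.obj Z, ∃ h, f ≫ h = g) (g : F.obj X ⟶ Z) :
    ∃ h, F.map f ≫ h = g := by
  obtain ⟨h, hh⟩ := hf (adj.homEquiv _ _ g)
  exact ⟨(adj.homEquiv _ _).symm h, by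
    rw [← adj.homEquiv_naturality_left_symm, hh, Equiv.symm_apply_apply]⟩

def mapHomologicalComplex [Limits.HasZeroMorphisms C] [Limits.HasZeroMorphisms D]
    {F : C ⥤ D} {G : D ⥤ C} [F.PreservesZeroMorphisms] [G.PreservesZeroMorphisms]
    (adj : F ⊣ G) {ι : Type*} (c : ComplexShape ι) :
    F.mapHomologicalComplex c ⊣ G.mapHomologicalComplex c :=
  Adjunction.mkOfUnitCounit
    { unit :=
        { app A :=
            { f i := adj.unit.app (A.X i)
              comm' i j _ := (adj.unit.naturality (A.d i j)).symm }
          naturality _ _ f := by ext i; exact adj.unit.naturality (f.f i) }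
      counit :=
        { app B :=
            { f i := adj.counit.app (B.X i)
              comm' i j _ := (adj.counit.naturality (B.d i j)).symm }
          naturality _ _ f := by ext i; exact adj.counit.naturality (f.f i) }
      left_triangle := by
        ext A i
        simp only [Functor.comp_obj, Functor.id_obj, NatTrans.comp_app, Functor.whiskerRight_app,
          Functor.associator_hom_app, Functor.whiskerLeft_app, Category.id_comp,
          HomologicalComplex.comp_f, Functor.mapHomologicalComplex_map_f, NatTrans.id_app',
          HomologicalComplex.id_f]
        exact adj.left_triangle_components (A.X i)
      right_triangle := by
        ext B i
        simp only [Functor.comp_obj, Functor.id_obj, NatTrans.comp_app, Functor.whiskerLeft_app,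
          Functor.associator_inv_app, Functor.whiskerRight_app, Category.id_comp,
          HomologicalComplex.comp_f, Functor.mapHomologicalComplex_map_f, NatTrans.id_app',
          HomologicalComplex.id_f]
        exact adj.right_triangle_components (B.X i) }

section Homotopy

variable [Preadditive C] [Preadditive D] {F : C ⥤ D} {G : D ⥤ C} [F.Additive] [G.Additive]
  {ι : Type*}

def mapHomotopyCategory (adj : F ⊣ G) (c : ComplexShape ι) :
    F.mapHomotopyCategory c ⊣ G.mapHomotopyCategory c :=
  Adjunction.mkOfUnitCounit
    { unit :=
        { app A := (HomotopyCategory.quotient C c).map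
            ((adj.mapHomologicalComplex c).unit.app A.as)
          naturality := by
            rintro ⟨A⟩ ⟨B⟩ ⟨f : A ⟶ B⟩
            exact (((HomotopyCategory.quotient C c).map_comp _ _).symm.trans (congrArg _
              ((adj.mapHomologicalComplex c).unit.naturality f))).trans
              ((HomotopyCategory.quotient C c).map_comp _ _) }
      counit :=
        { app B := (HomotopyCategory.quotient D c).map
            ((adj.mapHomologicalComplex c).counit.app B.as)
          naturality := by
            rintro ⟨A⟩ ⟨B⟩ ⟨f : A ⟶ B⟩
            exact (((HomotopyCategory.quotient D c).map_comp _ _).symm.trans (congrArg _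
              ((adj.mapHomologicalComplex c).counit.naturality f))).trans
              ((HomotopyCategory.quotient D c).map_comp _ _) }
      left_triangle := by
        ext A
        simp only [NatTrans.comp_app, Functor.whiskerRight_app, Functor.whiskerLeft_app,
          Functor.associator_hom_app]
        erw [Category.id_comp]
        exact (((HomotopyCategory.quotient D c).map_comp _ _).symm.trans (congrArg _
          ((adj.mapHomologicalComplex c).left_triangle_components A.as))).trans
          ((HomotopyCategory.quotient D c).map_id _)
      right_triangle := by
        ext B
        simp only [NatTrans.comp_app, Functor.whiskerRight_app, Functor.whiskerLeft_app,
          Functor.associator_inv_app]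
        erw [Category.id_comp]
        exact (((HomotopyCategory.quotient C c).map_comp _ _).symm.trans (congrArg _
          ((adj.mapHomologicalComplex c).right_triangle_components B.as))).trans
          ((HomotopyCategory.quotient C c).map_id _) }

lemma exists_mapHomotopyCategory_map_comp_eq (adj : F ⊣ G) {ι' : Type*} [Fintype ι']
    (p : ι' → (F ⋙ G ⟶ 𝟭 C)) (i : ι' → (𝟭 C ⟶ F ⋙ G)) (hpi : ∑ j, p j ≫ i j = 𝟙 _)
    {c : ComplexShape ι} {X Y : HomotopyCategory C c} (f : X ⟶ Y) (Z : HomologicalComplex C c)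
    (hf : ∀ g : X ⟶ (HomotopyCategory.quotient C c).obj Z, ∃ h, f ≫ h = g)
    (g : (F.mapHomotopyCategory c).obj X ⟶
      (F.mapHomotopyCategory c).obj ((HomotopyCategory.quotient C c).obj Z)) :
    ∃ h, (F.mapHomotopyCategory c).map f ≫ h = g := by
  refine (adj.mapHomotopyCategory c).exists_map_comp_eq f (fun g => ?_) g
  let Q := HomotopyCategory.quotient C c
  have hsum : ∑ j, Q.map ((NatTrans.mapHomologicalComplex (p j) c).app Z) ≫
      Q.map ((NatTrans.mapHomologicalComplex (i j) c).app Z) = 𝟙 _ := by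
    simp only [← Functor.map_comp, ← Functor.map_sum,
      NatTrans.sum_mapHomologicalComplex_app_comp_app p i hpi, Functor.map_id]
  exact Preadditive.exists_comp_eq_of_sum_comp_eq_id f hf _ _ hsum g

end Homotopy

end Adjunction

end CategoryTheory

lemma Module.Basis.sum_tmul_lift_lsmul_coord {K V N ι : Type*} [CommSemiring K]
    [AddCommMonoid V] [Module K V] [AddCommMonoid N] [Module K N] [Fintype ι]
    (b : Module.Basis ι K V) (x : V ⊗[K] N) :
    ∑ j, b j ⊗ₜ[K] TensorProduct.lift ((LinearMap.lsmul K N).comp (b.coord j)) x = x := by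
  induction x using TensorProduct.induction_on with
  | zero => simp
  | tmul v n =>
    simp only [TensorProduct.lift.tmul, LinearMap.comp_apply, LinearMap.lsmul_apply,
      ← TensorProduct.smul_tmul, ← TensorProduct.sum_tmul, Module.Basis.coord_apply, b.sum_repr]
  | add x y hx hy => simp only [map_add, TensorProduct.tmul_add, Finset.sum_add_distrib, hx, hy]

section BaseChangeAdjunction

variable (K R Λ : Type) [Field K] [Ring R] [Algebra K R] [Ring Λ] [Algebra K Λ]

noncomputable abbrev restrictFunctor : ModuleCat.{0} (R ⊗[K] Λ) ⥤ ModuleCat.{0} Λ :=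
  ModuleCat.restrictScalars (Algebra.TensorProduct.includeRight : Λ →ₐ[K] R ⊗[K] Λ).toRingHom

variable {K R Λ}

lemma tmul_smul_tmul_tensorMod {M : Type} [AddCommGroup M] [Module Λ M] (r' r : R) (a : Λ)
    (m : RestrictScalars K Λ M) :
    (r' ⊗ₜ[K] a : R ⊗[K] Λ) • (r ⊗ₜ[K] m : TensorMod K R Λ M) = (r' * r) ⊗ₜ[K] (a • m) := by
  change r' • (Module.toModuleEnd K (RestrictScalars K Λ M) a).lTensor R (r ⊗ₜ[K] m) = _
  rw [LinearMap.lTensor_tmul, TensorProduct.smul_tmul', smul_eq_mul]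
  rfl

variable (K Λ) in
noncomputable def inclNatTrans (r : R) :
    𝟭 (ModuleCat.{0} Λ) ⟶ tensorFunctor K R Λ ⋙ restrictFunctor K R Λ where
  app M := ModuleCat.ofHom (Y := (restrictFunctor K R Λ).obj ((tensorFunctor K R Λ).obj M))
    { toFun := TensorProduct.mk K R (RestrictScalars K Λ M) r
      map_add' := map_add _
      map_smul' a (m : RestrictScalars K Λ M) := by
        change _ = ((1 : R) ⊗ₜ[K] a : R ⊗[K] Λ) • (r ⊗ₜ[K] m : TensorMod K R Λ M)
        rw [tmul_smul_tmul_tensorMod, one_mul]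
        rfl }
  naturality M N u := by
    apply ModuleCat.hom_ext; apply LinearMap.ext; intro m
    exact (LinearMap.lTensor_tmul R (restrictMap K Λ u.hom) r m).symm

variable (K Λ) in
noncomputable def projNatTrans (φ : R →ₗ[K] K) :
    tensorFunctor K R Λ ⋙ restrictFunctor K R Λ ⟶ 𝟭 (ModuleCat.{0} Λ) where
  app M := ModuleCat.ofHom (X := (restrictFunctor K R Λ).obj ((tensorFunctor K R Λ).obj M))
    { toFun := TensorProduct.lift ((LinearMap.lsmul K (RestrictScalars K Λ M)).comp φ)
      map_add' := map_add _
      map_smul' a (x : TensorMod K R Λ M) := by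
        change TensorProduct.lift _ (((1 : R) ⊗ₜ[K] a : R ⊗[K] Λ) • x) =
          a • (TensorProduct.lift ((LinearMap.lsmul K (RestrictScalars K Λ M)).comp φ) x :
            RestrictScalars K Λ M)
        induction x using TensorProduct.induction_on with
        | zero => rw [smul_zero, map_zero, smul_zero]
        | tmul r m =>
          rw [tmul_smul_tmul_tensorMod, one_mul, TensorProduct.lift.tmul, TensorProduct.lift.tmul]
          exact smul_comm (φ r) a m
        | add x y hx hy => rw [smul_add, map_add, map_add, hx, hy, smul_add] }
  naturality M N u := by
    apply ModuleCat.hom_ext; apply LinearMap.ext; intro (x : TensorMod K R Λ M)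
    change TensorProduct.lift _ (LinearMap.lTensor R (restrictMap K Λ u.hom) x) =
      restrictMap K Λ u.hom (TensorProduct.lift _ x)
    induction x using TensorProduct.induction_on with
    | zero => rw [map_zero, map_zero, map_zero, map_zero]
    | tmul r m =>
      rw [LinearMap.lTensor_tmul, TensorProduct.lift.tmul, TensorProduct.lift.tmul]
      exact ((restrictMap K Λ u.hom).map_smul (φ r) m).symm
    | add x y hx hy => rw [map_add, map_add, map_add, hx, hy, map_add]

variable (K Λ) in
lemma sum_projNatTrans_comp_inclNatTrans {ι : Type*} [Fintype ι] (b : Module.Basis ι K R) :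
    ∑ j, projNatTrans K Λ (b.coord j) ≫ inclNatTrans K Λ (b j) = 𝟙 _ := by
  ext M : 2
  rw [NatTrans.app_sum]
  apply ModuleCat.hom_ext; apply LinearMap.ext; intro x
  rw [ModuleCat.hom_sum, LinearMap.sum_apply]
  exact b.sum_tmul_lift_lsmul_coord x

noncomputable def tensorModAction (W : ModuleCat.{0} (R ⊗[K] Λ)) :
    TensorMod K R Λ ((restrictFunctor K R Λ).obj W) →+ W :=
  TensorProduct.liftAddHom (N := RestrictScalars K Λ ((restrictFunctor K R Λ).obj W))
    (((smulAddHom (R ⊗[K] Λ) W).comp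
      (Algebra.TensorProduct.includeLeft : R →ₐ[K] R ⊗[K] Λ).toRingHom.toAddMonoidHom :
        R →+ RestrictScalars K Λ ((restrictFunctor K R Λ).obj W) →+ W))
    (fun k r (w : W) => by
      change ((k • r) ⊗ₜ[K] (1 : Λ) : R ⊗[K] Λ) • w =
        (r ⊗ₜ[K] (1 : Λ) : R ⊗[K] Λ) • ((1 : R) ⊗ₜ[K] algebraMap K Λ k : R ⊗[K] Λ) • w
      rw [← mul_smul, Algebra.TensorProduct.tmul_mul_tmul, mul_one, one_mul,
        Algebra.algebraMap_eq_smul_one, TensorProduct.smul_tmul])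

variable (K R Λ) in
noncomputable def counitNatTrans :
    restrictFunctor K R Λ ⋙ tensorFunctor K R Λ ⟶ 𝟭 (ModuleCat.{0} (R ⊗[K] Λ)) where
  app W := ModuleCat.ofHom (X := (tensorFunctor K R Λ).obj ((restrictFunctor K R Λ).obj W))
    { toFun := tensorModAction W
      map_add' := map_add _
      map_smul' s (x : TensorMod K R Λ ((restrictFunctor K R Λ).obj W)) := by
        change tensorModAction W (s • x) = s • tensorModAction W x
        induction s using TensorProduct.induction_on with
        | zero => rw [zero_smul, zero_smul, map_zero]
        | add s t hs ht => rw [add_smul, add_smul, map_add, hs, ht]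
        | tmul r' a =>
          induction x using TensorProduct.induction_on with
          | zero => rw [smul_zero, map_zero, smul_zero]
          | add x y hx hy => rw [smul_add, map_add, map_add, hx, hy, smul_add]
          | tmul r w =>
            rw [tmul_smul_tmul_tensorMod]
            have key : ∀ w : W, ((r' * r) ⊗ₜ[K] (1 : Λ) : R ⊗[K] Λ) • ((1 : R) ⊗ₜ[K] a) • w =
                (r' ⊗ₜ[K] a : R ⊗[K] Λ) • (r ⊗ₜ[K] (1 : Λ) : R ⊗[K] Λ) • w := fun w => by
              rw [← mul_smul, ← mul_smul, Algebra.TensorProduct.tmul_mul_tmul,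
                Algebra.TensorProduct.tmul_mul_tmul, mul_one, one_mul, mul_one]
            exact key w }
  naturality W W' u := by
    apply ModuleCat.hom_ext; apply LinearMap.ext
    intro (x : TensorMod K R Λ ((restrictFunctor K R Λ).obj W))
    change tensorModAction W'
        (LinearMap.lTensor R (restrictMap K Λ ((restrictFunctor K R Λ).map u).hom) x) =
      u (tensorModAction W x)
    induction x using TensorProduct.induction_on with
    | zero => rw [map_zero, map_zero, map_zero, map_zero]
    | tmul r w =>
      rw [LinearMap.lTensor_tmul]
      exact (u.hom.map_smul _ _).symm
    | add x y hx hy => rw [map_add, map_add, map_add, hx, hy, map_add]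

variable (K R Λ) in
noncomputable def tensorAdjunction : tensorFunctor K R Λ ⊣ restrictFunctor K R Λ :=
  Adjunction.mkOfUnitCounit
    { unit := inclNatTrans K Λ 1
      counit := counitNatTrans K R Λ
      left_triangle := by
        ext M : 2
        apply ModuleCat.hom_ext; apply LinearMap.ext; intro (x : TensorMod K R Λ M)
        change tensorModAction _
          (LinearMap.lTensor R (restrictMap K Λ ((inclNatTrans K Λ (1 : R)).app M).hom) x) = x
        induction x using TensorProduct.induction_on with
        | zero => rw [map_zero, map_zero]; rfl
        | tmul r m =>
          rw [LinearMap.lTensor_tmul]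
          change ((r ⊗ₜ[K] (1 : Λ) : R ⊗[K] Λ) • ((1 : R) ⊗ₜ[K] m : TensorMod K R Λ M)) = r ⊗ₜ m
          rw [tmul_smul_tmul_tensorMod, mul_one, one_smul]
        | add x y hx hy => rw [map_add, map_add, hx, hy]; rfl
      right_triangle := by
        ext W : 2
        apply ModuleCat.hom_ext; apply LinearMap.ext; intro (w : W)
        exact one_smul (R ⊗[K] Λ) w }

end BaseChangeAdjunction

section S2
variable (K R Λ : Type) [Field K] [CommRing R] [Algebra K R] [Ring Λ] [Algebra K Λ]
variable [FiniteDimensional K R] [FiniteDimensional K Λ]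

theorem leftApproximation_tensor
    (𝒴 : Set (CochainComplex (ModuleCat.{0} Λ) ℤ))
    (X : CochainComplex (ModuleCat.{0} Λ) ℤ)
    (Y : CochainComplex (ModuleCat.{0} Λ) ℤ)
    (f : (HomotopyCategory.quotient (ModuleCat.{0} Λ) (ComplexShape.up ℤ)).obj X ⟶
         (HomotopyCategory.quotient (ModuleCat.{0} Λ) (ComplexShape.up ℤ)).obj Y)
    (happrox : ∀ Z ∈ 𝒴,
      ∀ g : (HomotopyCategory.quotient (ModuleCat.{0} Λ) (ComplexShape.up ℤ)).obj X ⟶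
            (HomotopyCategory.quotient (ModuleCat.{0} Λ) (ComplexShape.up ℤ)).obj Z,
        ∃ h, f ≫ h = g) :
    ∀ Z ∈ 𝒴,
      ∀ g : ((tensorFunctor K R Λ).mapHomotopyCategory (ComplexShape.up ℤ)).obj
              ((HomotopyCategory.quotient (ModuleCat.{0} Λ) (ComplexShape.up ℤ)).obj X) ⟶
            ((tensorFunctor K R Λ).mapHomotopyCategory (ComplexShape.up ℤ)).obj
              ((HomotopyCategory.quotient (ModuleCat.{0} Λ) (ComplexShape.up ℤ)).obj Z),
        ∃ h : ((tensorFunctor K R Λ).mapHomotopyCategory (ComplexShape.up ℤ)).obj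
                ((HomotopyCategory.quotient (ModuleCat.{0} Λ) (ComplexShape.up ℤ)).obj Y) ⟶
              ((tensorFunctor K R Λ).mapHomotopyCategory (ComplexShape.up ℤ)).obj
                ((HomotopyCategory.quotient (ModuleCat.{0} Λ) (ComplexShape.up ℤ)).obj Z),
          ((tensorFunctor K R Λ).mapHomotopyCategory (ComplexShape.up ℤ)).map f ≫ h = g := by
  intro Z hZ g
  exact (tensorAdjunction K R Λ).exists_mapHomotopyCategory_map_comp_eq
    (fun j => projNatTrans K Λ ((Module.finBasis K R).coord j))
    (fun j => inclNatTrans K Λ (Module.finBasis K R j))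
    (sum_projNatTrans_comp_inclNatTrans K Λ (Module.finBasis K R)) f Z (happrox Z hZ) g

end S2
end
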